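/- arXiv:2604.02840 — 5 statements merged into one kernel-verified Lean document; each statement's English description precedes it below -/
import Mathlib

section
/- Let A, V̂ ∈ ℂ^{n×n} with V̂ invertible, and D̂ = diag(d̂₁,…,d̂ₙ). Define R = A V̂ − V̂ D̂, Y = V̂⁻¹ R, and D̃ = D̂ + diag(Y) with entries d̃ᵢ = d̂ᵢ + yᵢᵢ. Assume d̃ᵢ ≠ d̃ⱼ for all i ≠ j. Define Ẽ by ẽᵢᵢ = 0 and ẽᵢⱼ = yᵢⱼ/(d̃ⱼ − d̃ᵢ) for i ≠ j, and set Ṽ = V̂(I + Ẽ). Then V̂⁻¹(A Ṽ − Ṽ D̃) = Y Ẽ − Y_d Ẽ, where Y_d = diag(y₁₁,…,yₙₙ). -/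
/-!
Conjugating by `V̂` turns `A` into `D̂ + Y = D̃ - Y_d + Y`, so the new residual is
`(D̃ - Y_d + Y)(I + Ẽ) - (I + Ẽ) D̃ = (Y - Y_d) - (Ẽ D̃ - D̃ Ẽ) + (Y - Y_d) Ẽ`.
The correction `Ẽ` is chosen to solve the Sylvester equation `Ẽ D̃ - D̃ Ẽ = Y - Y_d`
entrywise, `ẽᵢⱼ (d̃ⱼ - d̃ᵢ) = yᵢⱼ`, which cancels the first two terms.
-/

open Matrix

section

variable {ι K : Type*} [Fintype ι] [DecidableEq ι]

theorem mul_diagonal_sub_diagonal_mul_of_apply_eq_div [Field K] {Y E : Matrix ι ι K}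
    {dt : ι → K} (hsep : ∀ i j, i ≠ j → dt i ≠ dt j)
    (hE : ∀ i j, E i j = if i = j then 0 else Y i j / (dt j - dt i)) :
    E * diagonal dt - diagonal dt * E = Y - diagonal (fun i => Y i i) := by
  ext i j
  rw [Matrix.sub_apply, mul_diagonal, diagonal_mul, Matrix.sub_apply, diagonal_apply, hE]
  by_cases hij : i = j
  · subst hij
    simp
  · have hne : dt j - dt i ≠ 0 := sub_ne_zero.mpr (hsep j i (Ne.symm hij))
    simp only [hij, if_false, sub_zero]
    field_simp

theorem inv_mul_sub_mul_of_isUnit_det [CommRing K] {V : Matrix ι ι K} (hV : IsUnit V.det)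
    (A M N : Matrix ι ι K) :
    V⁻¹ * (A * (V * M) - V * M * N) = V⁻¹ * A * V * M - M * N := by
  rw [Matrix.mul_sub, mul_assoc V M N, ← mul_assoc V⁻¹ V, nonsing_inv_mul V hV, one_mul,
    ← mul_assoc, ← mul_assoc]

theorem inv_mul_mul_eq_diagonal_add_inv_mul_residual [CommRing K] {V : Matrix ι ι K}
    (hV : IsUnit V.det) (A : Matrix ι ι K) (d : ι → K) :
    V⁻¹ * A * V = diagonal d + V⁻¹ * (A * V - V * diagonal d) := by
  rw [Matrix.mul_sub, ← mul_assoc V⁻¹ V, nonsing_inv_mul V hV, one_mul, mul_assoc]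
  abel

end

theorem right_only_exact_residual_identity {n : ℕ}
    (A V : Matrix (Fin n) (Fin n) ℂ) (hV : IsUnit V.det)
    (d : Fin n → ℂ)
    (R Y : Matrix (Fin n) (Fin n) ℂ)
    (hR : R = A * V - V * Matrix.diagonal d)
    (hY : Y = V⁻¹ * R)
    (dt : Fin n → ℂ) (hdt : ∀ i, dt i = d i + Y i i)
    (hsep : ∀ i j, i ≠ j → dt i ≠ dt j)
    (E : Matrix (Fin n) (Fin n) ℂ)
    (hE : ∀ i j, E i j = if i = j then 0 else Y i j / (dt j - dt i))
    (Vt : Matrix (Fin n) (Fin n) ℂ)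
    (hVt : Vt = V * (1 + E)) :
    V⁻¹ * (A * Vt - Vt * Matrix.diagonal dt)
      = Y * E - Matrix.diagonal (fun i => Y i i) * E := by
  set Yd := diagonal fun i => Y i i
  have hD : diagonal d = diagonal dt - Yd := by
    rw [eq_sub_iff_add_eq, diagonal_add]
    exact congrArg diagonal (funext fun i => (hdt i).symm)
  have hAV : V⁻¹ * A * V = diagonal dt - Yd + Y := by
    rw [inv_mul_mul_eq_diagonal_add_inv_mul_residual hV A d, ← hR, ← hY, hD]
  have hSylv := mul_diagonal_sub_diagonal_mul_of_apply_eq_div hsep hE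
  calc V⁻¹ * (A * Vt - Vt * diagonal dt)
      = (diagonal dt - Yd + Y) * (1 + E) - (1 + E) * diagonal dt := by
        rw [hVt, inv_mul_sub_mul_of_isUnit_det hV, hAV]
    _ = (Y - Yd) - (E * diagonal dt - diagonal dt * E) + (Y * E - Yd * E) := by noncomm_ring
    _ = Y * E - Yd * E := by rw [hSylv, sub_self, zero_add]
end

section
/- Under the setup of the right-only refinement (R = A V̂ − V̂ D̂, Y = V̂⁻¹ R, D̃ = D̂ + diag(Y) with pairwise distinct diagonal entries, Ẽ defined by ẽᵢᵢ = 0, ẽᵢⱼ = yᵢⱼ/(d̃ⱼ − d̃ᵢ), Ṽ = V̂(I + Ẽ)), the Frobenius norm of the updated scaled residual satisfies ‖V̂⁻¹(A Ṽ − Ṽ D̃)‖_F ≤ 2‖Y‖_F² / sep(D̃), where sep(D̃) = min_{i≠j} |d̃ᵢ − d̃ⱼ| > 0. -/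
open Matrix

noncomputable def frob {n : ℕ} (M : Matrix (Fin n) (Fin n) ℂ) : ℝ :=
  Real.sqrt (∑ i, ∑ j, ‖M i j‖ ^ 2)

/-!
Since `V̂⁻¹ A V̂ = D̂ + Y`, the correction `Ẽ` solves the Sylvester equation
`Ẽ D̃ - D̃ Ẽ = Y - diag Y`, so in `V̂⁻¹ (A Ṽ - Ṽ D̃) = (Y + D̂)(1 + Ẽ) - (1 + Ẽ) D̃` all terms of
first order in `Y` cancel and only `(Y - diag Y) Ẽ` is left. The Frobenius norm is submultiplicative
and monotone in the moduli of the entries, so this is at most `‖Y‖_F · ‖Y‖_F / sep`.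
-/

theorem add_mul_one_add_sub_one_add_mul_eq_of_sylvester {R : Type*} [Ring R] {y y₀ d e : R}
    (h : e * (d + y₀) - (d + y₀) * e = y - y₀) :
    (y + d) * (1 + e) - (1 + e) * (d + y₀) = (y - y₀) * e := by
  have expand : (y + d) * (1 + e) - (1 + e) * (d + y₀)
      = (y - y₀) * e + ((y - y₀) - (e * (d + y₀) - (d + y₀) * e)) := by noncomm_ring
  rw [expand, h, sub_self, add_zero]

namespace Matrix

section Frobenius

attribute [local instance] frobeniusSeminormedAddCommGroup

variable {m n α : Type*} [Fintype m] [Fintype n] [SeminormedAddCommGroup α]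

theorem frobenius_norm_sq_eq_sum (A : Matrix m n α) : ‖A‖ ^ 2 = ∑ i, ∑ j, ‖A i j‖ ^ 2 := by
  change ‖WithLp.toLp 2 fun i => WithLp.toLp 2 fun j => A i j‖ ^ 2 = _
  simp only [PiLp.norm_sq_eq_of_L2]

theorem frobenius_norm_le_mul_of_norm_apply_le {A B : Matrix m n α} {c : ℝ} (hc : 0 ≤ c)
    (h : ∀ i j, ‖A i j‖ ≤ c * ‖B i j‖) : ‖A‖ ≤ c * ‖B‖ := by
  refine (pow_le_pow_iff_left₀ (norm_nonneg _) (by positivity) two_ne_zero).mp ?_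
  rw [mul_pow, frobenius_norm_sq_eq_sum, frobenius_norm_sq_eq_sum, Finset.mul_sum]
  gcongr with i _
  rw [Finset.mul_sum]
  gcongr with j _
  rw [← mul_pow]
  exact pow_le_pow_left₀ (norm_nonneg _) (h i j) 2

end Frobenius

variable {n K : Type*} [Fintype n] [DecidableEq n]

theorem mul_diagonal_sub_diagonal_mul_apply [CommRing K] (E : Matrix n n K) (d : n → K) (i j : n) :
    (E * diagonal d - diagonal d * E) i j = (d j - d i) * E i j := by
  simp only [sub_apply, mul_diagonal, diagonal_mul]
  ring

theorem mul_diagonal_sub_diagonal_mul_eq_sub_diagonal_diag [Field K] {Y E : Matrix n n K}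
    {d : n → K} (hd : Function.Injective d)
    (hE : ∀ i j, E i j = if i = j then 0 else Y i j / (d j - d i)) :
    E * diagonal d - diagonal d * E = Y - diagonal (diag Y) := by
  ext i j
  rw [mul_diagonal_sub_diagonal_mul_apply, hE, sub_apply]
  by_cases hij : i = j
  · simp [hij]
  · have hne : d j - d i ≠ 0 := sub_ne_zero.mpr (hd.ne (Ne.symm hij))
    simp only [if_neg hij, diagonal_apply_ne _ hij, sub_zero]
    field_simp

theorem inv_mul_refined_residual_eq [Field K] {A V Y E : Matrix n n K} {d dt : n → K}
    (hV : IsUnit V.det) (hY : Y = V⁻¹ * (A * V - V * diagonal d))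
    (hdt : ∀ i, dt i = d i + Y i i)
    (hE : E * diagonal dt - diagonal dt * E = Y - diagonal (diag Y)) :
    V⁻¹ * (A * (V * (1 + E)) - V * (1 + E) * diagonal dt) = (Y - diagonal (diag Y)) * E := by
  have hVV : V⁻¹ * V = 1 := nonsing_inv_mul V hV
  have hAV : V⁻¹ * (A * V) = Y + diagonal d := by
    rw [hY, Matrix.mul_sub, ← Matrix.mul_assoc V⁻¹ V, hVV, Matrix.one_mul, sub_add_cancel]
  have hdiag : diagonal dt = diagonal d + diagonal (diag Y) := by
    rw [diagonal_add]
    exact congrArg diagonal (funext hdt)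
  rw [hdiag] at hE ⊢
  calc V⁻¹ * (A * (V * (1 + E)) - V * (1 + E) * (diagonal d + diagonal (diag Y)))
      = V⁻¹ * (A * V) * (1 + E) - V⁻¹ * V * (1 + E) * (diagonal d + diagonal (diag Y)) := by
        simp only [Matrix.mul_sub, Matrix.mul_assoc]
    _ = (Y - diagonal (diag Y)) * E := by
        rw [hAV, hVV, Matrix.one_mul, add_mul_one_add_sub_one_add_mul_eq_of_sylvester hE]

end Matrix

section Frob

attribute [local instance] frobeniusSeminormedAddCommGroup

variable {n : ℕ}

theorem frob_nonneg (M : Matrix (Fin n) (Fin n) ℂ) : 0 ≤ frob M :=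
  Real.sqrt_nonneg _

theorem frob_eq_norm (M : Matrix (Fin n) (Fin n) ℂ) : frob M = ‖M‖ := by
  rw [frob, ← frobenius_norm_sq_eq_sum, Real.sqrt_sq (norm_nonneg _)]

theorem frob_mul_le (A B : Matrix (Fin n) (Fin n) ℂ) : frob (A * B) ≤ frob A * frob B := by
  simpa only [frob_eq_norm] using frobenius_norm_mul A B

theorem frob_le_mul_of_norm_apply_le {A B : Matrix (Fin n) (Fin n) ℂ} {c : ℝ} (hc : 0 ≤ c)
    (h : ∀ i j, ‖A i j‖ ≤ c * ‖B i j‖) : frob A ≤ c * frob B := by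
  simpa only [frob_eq_norm] using frobenius_norm_le_mul_of_norm_apply_le hc h

end Frob

theorem right_only_quadratic_residual_bound {n : ℕ}
    (A V : Matrix (Fin n) (Fin n) ℂ) (hV : IsUnit V.det)
    (d : Fin n → ℂ)
    (R Y : Matrix (Fin n) (Fin n) ℂ)
    (hR : R = A * V - V * Matrix.diagonal d)
    (hY : Y = V⁻¹ * R)
    (dt : Fin n → ℂ) (hdt : ∀ i, dt i = d i + Y i i)
    (sep : ℝ) (hseppos : 0 < sep)
    (hsep : ∀ i j, i ≠ j → sep ≤ ‖dt i - dt j‖)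
    (E : Matrix (Fin n) (Fin n) ℂ)
    (hE : ∀ i j, E i j = if i = j then 0 else Y i j / (dt j - dt i))
    (Vt : Matrix (Fin n) (Fin n) ℂ)
    (hVt : Vt = V * (1 + E)) :
    frob (V⁻¹ * (A * Vt - Vt * Matrix.diagonal dt)) ≤ 2 * frob Y ^ 2 / sep := by
  have hinj : Function.Injective dt := fun i j hij => by
    by_contra hne
    have := hsep i j hne
    rw [hij, sub_self, norm_zero] at this
    linarith
  have hres : V⁻¹ * (A * Vt - Vt * diagonal dt) = (Y - diagonal (diag Y)) * E := by
    subst hVt hR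
    exact inv_mul_refined_residual_eq hV hY hdt
      (mul_diagonal_sub_diagonal_mul_eq_sub_diagonal_diag hinj hE)
  have hoff : frob (Y - diagonal (diag Y)) ≤ frob Y := by
    rw [← one_mul (frob Y)]
    refine frob_le_mul_of_norm_apply_le zero_le_one fun i j => ?_
    by_cases hij : i = j <;> simp [hij]
  have hEY : frob E ≤ sep⁻¹ * frob Y := by
    refine frob_le_mul_of_norm_apply_le (inv_nonneg.mpr hseppos.le) fun i j => ?_
    rw [hE]
    split_ifs with hij
    · rw [norm_zero]; positivity
    · rw [norm_div, div_eq_inv_mul]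
      gcongr
      exact hsep j i (Ne.symm hij)
  calc frob (V⁻¹ * (A * Vt - Vt * diagonal dt))
      ≤ frob (Y - diagonal (diag Y)) * frob E := hres ▸ frob_mul_le _ _
    _ ≤ frob Y * (sep⁻¹ * frob Y) := by gcongr <;> exact frob_nonneg _
    _ = frob Y ^ 2 / sep := by ring
    _ ≤ 2 * frob Y ^ 2 / sep := by gcongr; nlinarith [sq_nonneg (frob Y)]
end

section
/- Let V̂ ∈ ℂ^{n×n} be invertible and Ŵ ∈ ℂ^{n×n} arbitrary. Define Δ = Ŵᴴ V̂ − I. For any Ẽ ∈ ℂ^{n×n}, define F by Fᴴ = −Δ − Ẽ, and set Ṽ = V̂(I + Ẽ), W̃ = Ŵ(I + F). Then the updated biorthogonality error Δ̃ = W̃ᴴ Ṽ − I satisfies the exact identity Δ̃ = −Ẽ² − Ẽ Δ − Δ² − Δ² Ẽ − Ẽ Δ Ẽ. -/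
open Matrix

theorem one_sub_sub_mul_one_add_mul_one_add_sub_one {R : Type*} [Ring R] (d e : R) :
    (1 - d - e) * (1 + d) * (1 + e) - 1 = -(e * e) - e * d - d * d - d * d * e - e * d * e := by
  noncomm_ring

theorem star_mul_one_add_mul_mul_one_add {R : Type*} [Ring R] [StarRing R] (w v e f : R) :
    star (w * (1 + f)) * (v * (1 + e)) = (1 + star f) * (star w * v) * (1 + e) := by
  simp only [star_mul, star_add, star_one, mul_assoc]

theorem biorthogonality_error_exact_update_general {n : ℕ}
    (V W : Matrix (Fin n) (Fin n) ℂ)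
    (Δ E F Vt Wt Δt : Matrix (Fin n) (Fin n) ℂ)
    (hΔ : Δ = Wᴴ * V - 1)
    (hF : Fᴴ = -Δ - E)
    (hVt : Vt = V * (1 + E))
    (hWt : Wt = W * (1 + F))
    (hΔt : Δt = Wtᴴ * Vt - 1) :
    Δt = -(E * E) - E * Δ - Δ * Δ - Δ * Δ * E - E * Δ * E := by
  have hWV : Wᴴ * V = 1 + Δ := by rw [hΔ, add_sub_cancel]
  have hF' : 1 + Fᴴ = 1 - Δ - E := by rw [hF]; abel
  rw [hΔt, hVt, hWt, ← star_eq_conjTranspose, star_mul_one_add_mul_mul_one_add,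
    star_eq_conjTranspose, star_eq_conjTranspose, hWV, hF']
  exact one_sub_sub_mul_one_add_mul_one_add_sub_one Δ E

theorem biorthogonality_error_exact_update {n : ℕ}
    (V W : Matrix (Fin n) (Fin n) ℂ) (hV : IsUnit V.det)
    (Δ E F Vt Wt Δt : Matrix (Fin n) (Fin n) ℂ)
    (hΔ : Δ = Wᴴ * V - 1)
    (hF : Fᴴ = -Δ - E)
    (hVt : Vt = V * (1 + E))
    (hWt : Wt = W * (1 + F))
    (hΔt : Δt = Wtᴴ * Vt - 1) :
    Δt = -(E * E) - E * Δ - Δ * Δ - Δ * Δ * E - E * Δ * E :=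
  biorthogonality_error_exact_update_general V W Δ E F Vt Wt Δt hΔ hF hVt hWt hΔt
end

section
/- In the setting of the previous identity (Δ = Ŵᴴ V̂ − I, Fᴴ = −Δ − Ẽ, Ṽ = V̂(I+Ẽ), W̃ = Ŵ(I+F)), for any submultiplicative matrix norm ‖·‖, the updated biorthogonality error satisfies ‖W̃ᴴ Ṽ − I‖ ≤ (‖Ẽ‖ + ‖Δ‖)² + (‖Ẽ‖ + ‖Δ‖)³. -/
open Matrix

section Algebra

variable {R : Type*} [Ring R] [StarRing R]

theorem star_mul_sub_one_of_biorthogonal_update {V W Δ E F : R}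
    (hΔ : Δ = star W * V - 1) (hF : star F = -Δ - E) :
    star (W * (1 + F)) * (V * (1 + E)) - 1
      = -(E * E + E * Δ + Δ * Δ + Δ * Δ * E + E * Δ * E) := by
  have hWV : star W * V = 1 + Δ := by rw [hΔ]; abel
  calc star (W * (1 + F)) * (V * (1 + E)) - 1
      = (1 + star F) * (star W * V) * (1 + E) - 1 := by
        rw [star_mul, star_add, star_one]; noncomm_ring
    _ = _ := by rw [hF, hWV]; noncomm_ring

end Algebra

section Submultiplicative

variable {R : Type*} [Ring R] {ν : R → ℝ}

theorem le_mul_mul_of_submultiplicative (hνnonneg : ∀ M, 0 ≤ ν M)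
    (hνmul : ∀ M N, ν (M * N) ≤ ν M * ν N) (A B C : R) :
    ν (A * B * C) ≤ ν A * ν B * ν C :=
  (hνmul _ _).trans (mul_le_mul_of_nonneg_right (hνmul A B) (hνnonneg C))

theorem add_add_add_add_le_of_subadditive (hνadd : ∀ M N, ν (M + N) ≤ ν M + ν N)
    (A B C D G : R) :
    ν (A + B + C + D + G) ≤ ν A + ν B + ν C + ν D + ν G := by
  linarith [hνadd (A + B + C + D) G, hνadd (A + B + C) D, hνadd (A + B) C, hνadd A B]

theorem biorthogonal_update_error_le (hνnonneg : ∀ M, 0 ≤ ν M)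
    (hνadd : ∀ M N, ν (M + N) ≤ ν M + ν N) (hνmul : ∀ M N, ν (M * N) ≤ ν M * ν N)
    (E Δ : R) :
    ν (E * E + E * Δ + Δ * Δ + Δ * Δ * E + E * Δ * E)
      ≤ (ν E + ν Δ) ^ 2 + (ν E + ν Δ) ^ 3 := by
  have hE := hνnonneg E
  have hΔ := hνnonneg Δ
  calc ν (E * E + E * Δ + Δ * Δ + Δ * Δ * E + E * Δ * E)
      ≤ ν E * ν E + ν E * ν Δ + ν Δ * ν Δ + ν Δ * ν Δ * ν E + ν E * ν Δ * ν E := by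
        linarith [add_add_add_add_le_of_subadditive hνadd (E * E) (E * Δ) (Δ * Δ) (Δ * Δ * E)
            (E * Δ * E), hνmul E E, hνmul E Δ, hνmul Δ Δ,
          le_mul_mul_of_submultiplicative hνnonneg hνmul Δ Δ E,
          le_mul_mul_of_submultiplicative hνnonneg hνmul E Δ E]
    _ ≤ (ν E + ν Δ) ^ 2 + (ν E + ν Δ) ^ 3 := by
        nlinarith [mul_nonneg hE hΔ, mul_nonneg (mul_nonneg hE hΔ) hΔ,
          mul_nonneg (mul_nonneg hE hE) hE, mul_nonneg (mul_nonneg hΔ hΔ) hΔ]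

end Submultiplicative

theorem biorthogonality_error_norm_bound {n : ℕ}
    (ν : Matrix (Fin n) (Fin n) ℂ → ℝ)
    (hνnonneg : ∀ M, 0 ≤ ν M)
    (hνadd : ∀ M N, ν (M + N) ≤ ν M + ν N)
    (hνneg : ∀ M, ν (-M) = ν M)
    (hνmul : ∀ M N, ν (M * N) ≤ ν M * ν N)
    (V W : Matrix (Fin n) (Fin n) ℂ)
    (Δ E F Vt Wt : Matrix (Fin n) (Fin n) ℂ)
    (hΔ : Δ = Wᴴ * V - 1)
    (hF : Fᴴ = -Δ - E)
    (hVt : Vt = V * (1 + E))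
    (hWt : Wt = W * (1 + F)) :
    ν (Wtᴴ * Vt - 1) ≤ (ν E + ν Δ) ^ 2 + (ν E + ν Δ) ^ 3 := by
  rw [← star_eq_conjTranspose] at hΔ hF ⊢
  rw [hVt, hWt, star_mul_sub_one_of_biorthogonal_update hΔ hF, hνneg]
  exact biorthogonal_update_error_le hνnonneg hνadd hνmul E Δ
end

section
/- Let A V̂ = V̂(D̂ + Y⋆) with V̂ invertible, D̂ diagonal, and let D̃ = D̂ + diag(Y_W) for some matrix Y_W, where the entries d̃ᵢ of D̃ are pairwise distinct. Define Ẽ_W by ẽᵢᵢ = 0 and ẽᵢⱼ = (Y_W)ᵢⱼ/(d̃ⱼ − d̃ᵢ) for i ≠ j, and Ṽ = V̂(I + Ẽ_W). Then V̂⁻¹(A Ṽ − Ṽ D̃) = (Y⋆ − Y_W) + (Y⋆ − diag(Y_W)) Ẽ_W, exactly. -/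
/-! Conjugating by `V̂` and using `A V̂ = V̂ (D̂ + Y⋆)` reduces the residual to
`(D̂ + Y⋆)(I + Ẽ_W) − (I + Ẽ_W) D̃`. The off-diagonal matrix `Ẽ_W` is built to solve the
Sylvester equation `D̃ Ẽ_W − Ẽ_W D̃ = −(Y_W − diag Y_W)`, and with `D̂ = D̃ − diag Y_W`
everything else collapses by ring arithmetic. -/

open Matrix

namespace Matrix

variable {ι K : Type*} [Fintype ι] [DecidableEq ι]

theorem diagonal_mul_sub_mul_diagonal_apply [CommRing K] (a b : ι → K) (E : Matrix ι ι K)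
    (i j : ι) : (diagonal a * E - E * diagonal b) i j = (a i - b j) * E i j := by
  rw [sub_apply, diagonal_mul, mul_diagonal, sub_mul, mul_comm (E i j)]

theorem diagonal_commutator_eq_neg_offDiag [Field K] (dt : ι → K)
    (hsep : Pairwise fun i j => dt i ≠ dt j) (Y E : Matrix ι ι K)
    (hE : ∀ i j, E i j = if i = j then 0 else Y i j / (dt j - dt i)) :
    diagonal dt * E - E * diagonal dt = -(Y - diagonal fun i => Y i i) := by
  ext i j
  rw [diagonal_mul_sub_mul_diagonal_apply, hE, neg_apply, sub_apply]
  by_cases hij : i = j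
  · subst hij
    simp
  · have hne : dt j - dt i ≠ 0 := sub_ne_zero.mpr (hsep (Ne.symm hij))
    rw [if_neg hij, diagonal_apply_ne _ hij, sub_zero, ← neg_sub (dt j), neg_mul,
      mul_div_cancel₀ _ hne]

end Matrix

theorem residual_eq_of_commutator_eq {R : Type*} [Ring R] (D Ys Y Δ E : R)
    (hE : (D + Δ) * E - E * (D + Δ) = -(Y - Δ)) :
    (D + Ys) * (1 + E) - (1 + E) * (D + Δ) = (Ys - Y) + (Ys - Δ) * E :=
  calc (D + Ys) * (1 + E) - (1 + E) * (D + Δ)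
      = ((D + Δ) * E - E * (D + Δ)) - Δ - Δ * E + Ys + Ys * E := by noncomm_ring
    _ = (Ys - Y) + (Ys - Δ) * E := by rw [hE]; noncomm_ring

theorem W_method_exact_residual_identity {n : ℕ}
    (A V : Matrix (Fin n) (Fin n) ℂ) (hV : IsUnit V.det)
    (d : Fin n → ℂ)
    (Ystar YW : Matrix (Fin n) (Fin n) ℂ)
    (hAV : A * V = V * (Matrix.diagonal d + Ystar))
    (dt : Fin n → ℂ) (hdt : ∀ i, dt i = d i + YW i i)
    (hsep : ∀ i j, i ≠ j → dt i ≠ dt j)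
    (EW : Matrix (Fin n) (Fin n) ℂ)
    (hEW : ∀ i j, EW i j = if i = j then 0 else YW i j / (dt j - dt i))
    (Vt : Matrix (Fin n) (Fin n) ℂ)
    (hVt : Vt = V * (1 + EW)) :
    V⁻¹ * (A * Vt - Vt * Matrix.diagonal dt)
      = (Ystar - YW) + (Ystar - Matrix.diagonal (fun i => YW i i)) * EW := by
  have hDt : diagonal dt = diagonal d + diagonal fun i => YW i i := by
    rw [diagonal_add, funext hdt]
  have hSylvester := diagonal_commutator_eq_neg_offDiag dt hsep YW EW hEW
  rw [hDt] at hSylvester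
  have hconj : A * Vt - Vt * diagonal dt
      = V * ((diagonal d + Ystar) * (1 + EW) - (1 + EW) * diagonal dt) := by
    rw [hVt, ← mul_assoc, hAV, mul_sub, mul_assoc, mul_assoc]
  rw [hconj, nonsing_inv_mul_cancel_left V _ hV, hDt]
  exact residual_eq_of_commutator_eq _ _ _ _ _ hSylvester
end
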